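/- Read/write lock ordering invariant: consider n calls processed by the controller protocol where each call i receives futures F_R^i, F_W^i and produces F_R^{i+1}, F_W^{i+1} as follows — sequential calls await both F_R^i and F_W^i before executing, then fulfill both output futures after finishing; readonly calls await F_R^i, immediately fulfill F_R^{i+1}, execute, await F_W^i, then fulfill F_W^{i+1}; unordered calls forward both futures unchanged and execute immediately. Model 'await' and 'fulfill' as a happens-before partial order on events. Then: (a) for any sequential call j and any call i < j that is sequential or readonly, the finish event of i happens-before the start event of j; (b) for any readonly call j and any sequential call i < j, the finish of i happens-before the start of j. -/
import Mathlib


/-- Annotation classes for external calls. -/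
inductive Ann where
  | sequential | readonly | unordered
deriving DecidableEq

/-- Events of the controller protocol for `n` calls: each call `i` has a
start and a finish event, and there are fulfillment events for the chained
futures `F_R^i` and `F_W^i` (for `i = 0, …, n`). -/
inductive Ev (n : ℕ) where
  | start (i : Fin n)
  | finish (i : Fin n)
  | fulR (i : Fin (n + 1))
  | fulW (i : Fin (n + 1))

/-- The direct precedences of the read/write-lock controller protocol:
every call starts before it finishes; a sequential call awaits both incoming
futures before starting and fulfills both outgoing futures after finishing;
a readonly call awaits `F_R` before starting, immediately forwards `F_R`,
and fulfills its outgoing `F_W` only after it finishes and the incoming `F_W`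
is fulfilled; an unordered call forwards both futures unchanged and starts
immediately. -/
inductive Prec {n : ℕ} (ann : Fin n → Ann) : Ev n → Ev n → Prop
  | startFinish (i : Fin n) : Prec ann (.start i) (.finish i)
  | seqAwaitR (i : Fin n) (h : ann i = .sequential) :
      Prec ann (.fulR i.castSucc) (.start i)
  | seqAwaitW (i : Fin n) (h : ann i = .sequential) :
      Prec ann (.fulW i.castSucc) (.start i)
  | seqFulR (i : Fin n) (h : ann i = .sequential) :
      Prec ann (.finish i) (.fulR i.succ)
  | seqFulW (i : Fin n) (h : ann i = .sequential) :
      Prec ann (.finish i) (.fulW i.succ)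
  | roAwaitR (i : Fin n) (h : ann i = .readonly) :
      Prec ann (.fulR i.castSucc) (.start i)
  | roFwdR (i : Fin n) (h : ann i = .readonly) :
      Prec ann (.fulR i.castSucc) (.fulR i.succ)
  | roAwaitW (i : Fin n) (h : ann i = .readonly) :
      Prec ann (.fulW i.castSucc) (.fulW i.succ)
  | roFulW (i : Fin n) (h : ann i = .readonly) :
      Prec ann (.finish i) (.fulW i.succ)
  | unFwdR (i : Fin n) (h : ann i = .unordered) :
      Prec ann (.fulR i.castSucc) (.fulR i.succ)
  | unFwdW (i : Fin n) (h : ann i = .unordered) :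
      Prec ann (.fulW i.castSucc) (.fulW i.succ)

/-- Happens-before: the transitive closure of the protocol precedences. -/
def HB {n : ℕ} (ann : Fin n → Ann) : Ev n → Ev n → Prop :=
  Relation.TransGen (Prec ann)

lemma HB_stepW {n : ℕ} (ann : Fin n → Ann) (k : Fin n) :
    HB ann (.fulW k.castSucc) (.fulW k.succ) := by
  rcases h : ann k with _ | _ | _
  · exact Relation.TransGen.trans (.single (.seqAwaitW k h))
      (Relation.TransGen.trans (.single (.startFinish k)) (.single (.seqFulW k h)))
  · exact .single (.roAwaitW k h)
  · exact .single (.unFwdW k h)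

lemma HB_stepR {n : ℕ} (ann : Fin n → Ann) (k : Fin n) :
    HB ann (.fulR k.castSucc) (.fulR k.succ) := by
  rcases h : ann k with _ | _ | _
  · exact Relation.TransGen.trans (.single (.seqAwaitR k h))
      (Relation.TransGen.trans (.single (.startFinish k)) (.single (.seqFulR k h)))
  · exact .single (.roFwdR k h)
  · exact .single (.unFwdR k h)

lemma HB_chain {n : ℕ} (ann : Fin n → Ann) (f : Fin (n + 1) → Ev n)
    (step : ∀ k : Fin n, HB ann (f k.castSucc) (f k.succ)) :
    ∀ b a : Fin (n + 1), a < b → HB ann (f a) (f b) := by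
  intro b
  induction b using Fin.induction with
  | zero => intro a ha; exact absurd ha (Nat.not_lt_zero _)
  | succ i ih =>
    intro a ha
    have : a ≤ i.castSucc := by
      have := Fin.lt_def.mp ha
      simp [Fin.le_def] at *; omega
    rcases lt_or_eq_of_le this with h | h
    · exact Relation.TransGen.trans (ih a h) (step i)
    · rw [h]; exact step i

/-- the read/write-lock ordering invariant.
(a) For any sequential call `j` and any earlier call `i < j` that is
sequential or readonly, the finish of `i` happens-before the start of `j`.
(b) For any readonly call `j` and any earlier sequential call `i < j`,
the finish of `i` happens-before the start of `j`. -/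
theorem lock_protocol_ordering_invariant {n : ℕ} (ann : Fin n → Ann) :
    (∀ i j : Fin n, i < j → ann j = .sequential →
      (ann i = .sequential ∨ ann i = .readonly) →
      HB ann (.finish i) (.start j)) ∧
    (∀ i j : Fin n, i < j → ann j = .readonly → ann i = .sequential →
      HB ann (.finish i) (.start j)) := by
  constructor
  · intro i j hij hj hi
    have h1 : HB ann (.finish i) (.fulW i.succ) := by
      rcases hi with hi | hi
      · exact .single (.seqFulW i hi)
      · exact .single (.roFulW i hi)
    have h2 : HB ann (.fulW i.succ) (.fulW j.castSucc) ∨ i.succ = j.castSucc := by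
      rcases lt_or_eq_of_le (show i.succ ≤ j.castSucc by
        have hv := Fin.lt_def.mp hij; simp only [Fin.le_def, Fin.val_succ, Fin.coe_castSucc]; omega) with h | h
      · exact Or.inl (HB_chain ann (fun k => .fulW k) (HB_stepW ann) _ _ h)
      · exact Or.inr h
    have h3 : HB ann (.fulW j.castSucc) (.start j) := .single (.seqAwaitW j hj)
    rcases h2 with h2 | h2
    · exact Relation.TransGen.trans h1 (Relation.TransGen.trans h2 h3)
    · rw [h2] at h1; exact Relation.TransGen.trans h1 h3
  · intro i j hij hj hi
    have h1 : HB ann (.finish i) (.fulR i.succ) := .single (.seqFulR i hi)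
    have h3 : HB ann (.fulR j.castSucc) (.start j) := .single (.roAwaitR j hj)
    rcases lt_or_eq_of_le (show i.succ ≤ j.castSucc by
        have hv := Fin.lt_def.mp hij; simp only [Fin.le_def, Fin.val_succ, Fin.coe_castSucc]; omega) with h | h
    · exact Relation.TransGen.trans h1 (Relation.TransGen.trans
        (HB_chain ann (fun k => .fulR k) (HB_stepR ann) _ _ h) h3)
    · rw [h] at h1; exact Relation.TransGen.trans h1 h3
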